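/- Let Δ be a partition of m and let ρ_n(Δ) for n ≥ m denote the class sum in Z(ℂ[S_n]) of the cycle type obtained from Δ by appending n−m parts of size 1, rescaled by the factor |Aut(Δ̃)|/(|Aut(Δ)|·|Aut(Δ̃∖Δ)|) where Δ̃ is the extended diagram and Δ̃∖Δ consists of n−m parts of size 1. Then for partitions Δ₁, Δ₂, the product ρ_n(Δ₁)·ρ_n(Δ₂) in Z(ℂ[S_n]), expressed in the stabilized basis, has coefficients {Δ₁Δ₂}_k that vanish for all k > |Δ₁| + |Δ₂|. -/

import Mathlib

open Equiv

/-- The standard extension of degree `n` of a partition `Δ` of `m ≤ n`: append `n - m`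
parts of size `1`. -/
def extendPartition {m n : ℕ} (h : m ≤ n) (Δ : Nat.Partition m) : Nat.Partition n where
  parts := Δ.parts + Multiset.replicate (n - m) 1
  parts_pos := by
    intro i hi
    rcases Multiset.mem_add.mp hi with h1 | h2
    · exact Δ.parts_pos h1
    · rw [Multiset.eq_of_mem_replicate h2]; norm_num
  parts_sum := by
    rw [Multiset.sum_add, Δ.parts_sum, Multiset.sum_replicate, smul_eq_mul, mul_one]
    omega

/-- `|Aut(Δ)| = ∏_j m_j!·j^{m_j}`. -/
def aut {n : ℕ} (Δ : Nat.Partition n) : ℕ :=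
  ∏ j ∈ Finset.range (n + 1), (Δ.parts.count j).factorial * j ^ (Δ.parts.count j)

/-- The class sum `C_Δ` in `ℂ[S_n]`. -/
noncomputable def classSum (n : ℕ) (Δ : Nat.Partition n) :
    MonoidAlgebra ℂ (Perm (Fin n)) :=
  ∑ σ ∈ Finset.univ.filter
      (fun σ : Perm (Fin n) => σ.cycleType = Δ.parts.filter (fun j => 2 ≤ j)),
    MonoidAlgebra.single σ 1

/-- The stabilization `ρ_n` of a partition `Δ` of `m` into `Z(ℂ[S_n])`: the class sum of
the standard extension, rescaled by `|Aut(Δ̃)|/(|Aut(Δ)|·(n-m)!)`. -/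
noncomputable def rho (m n : ℕ) (Δ : Nat.Partition m) :
    MonoidAlgebra ℂ (Perm (Fin n)) :=
  if h : m ≤ n then
    ((aut (extendPartition h Δ) : ℂ) / ((aut Δ : ℂ) * (n - m).factorial)) •
      classSum n (extendPartition h Δ)
  else 0

/-- Linear extension of `Δ ↦ C_Δ` to formal linear combinations of partitions. -/
noncomputable def classLift (n : ℕ) (v : Nat.Partition n →₀ ℂ) :
    MonoidAlgebra ℂ (Perm (Fin n)) :=
  v.sum fun Δ c => c • classSum n Δ

/-- Linear extension of `Δ ↦ ρ_n(Δ)` to formal linear combinations of partitions of `k`. -/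
noncomputable def rhoLift (k n : ℕ) (v : Nat.Partition k →₀ ℂ) :
    MonoidAlgebra ℂ (Perm (Fin n)) :=
  v.sum fun Δ c => c • rho k n Δ

/-!
Following Ivanov and Kerov, call a pair `(S, σ)` with `σ.support ⊆ S` a partial permutation.
Summing `σ` over the partial permutations of `Fin n` with `|S| = m` and nontrivial cycle type
that of `Δ` gives `ρ_n(Δ)`: a permutation whose support has `s` elements lies in `C(n - s, m - s)`
sets `S`, and this binomial coefficient is exactly the normalising factor
`|Aut Δ̃| / (|Aut Δ| (n - m)!)`. Partial permutations multiply by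
`(S₁, σ₁)(S₂, σ₂) = (S₁ ∪ S₂, σ₁σ₂)`, so `ρ_n(Δ₁) ρ_n(Δ₂)` is the sum of `τ` over the partial
permutations `(S, τ)`, each counted as often as it factors. Transport along a bijection
`Fin |S| ≃ S` shows that this number depends only on `|S|` and the cycle type of `τ`, not on `n`.
Grouping by `k = |S|` gives `ρ_n(Δ₁) ρ_n(Δ₂) = ∑_k ρ_n(B_k)` with `B_k` independent of `n`, and
`B_k = 0` for `k > |Δ₁| + |Δ₂|` because `|S₁ ∪ S₂| ≤ |S₁| + |S₂|`. Class sums of distinct cycle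
types are linearly independent, so the recursion forces `{Δ₁Δ₂}_k = B_k`.
-/

open Finset

lemma Multiset.filter_two_le_replicate_one (k : ℕ) :
    (Multiset.replicate k 1).filter (fun j => 2 ≤ j) = 0 :=
  Multiset.filter_eq_nil.mpr fun j hj => by rw [Multiset.eq_of_mem_replicate hj]; omega

namespace Nat.Partition

variable {m : ℕ}

def nontrivialParts (Δ : Nat.Partition m) : Multiset ℕ := Δ.parts.filter (fun j => 2 ≤ j)

lemma two_le_of_mem_nontrivialParts {Δ : Nat.Partition m} {j : ℕ} (h : j ∈ Δ.nontrivialParts) :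
    2 ≤ j :=
  (Multiset.mem_filter.mp h).2

lemma parts_eq_nontrivialParts_add_replicate (Δ : Nat.Partition m) :
    Δ.parts = Δ.nontrivialParts + Multiset.replicate (Δ.parts.count 1) 1 := by
  have hsmall : Δ.parts.filter (fun j => ¬ 2 ≤ j) = Multiset.replicate (Δ.parts.count 1) 1 := by
    rw [← Multiset.filter_eq' Δ.parts 1]
    refine Multiset.filter_congr fun j hj => ?_
    have := Δ.parts_pos hj
    omega
  rw [nontrivialParts, ← hsmall, Multiset.filter_add_not]

lemma sum_nontrivialParts_add_count_one (Δ : Nat.Partition m) :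
    Δ.nontrivialParts.sum + Δ.parts.count 1 = m := by
  conv_rhs => rw [← Δ.parts_sum, parts_eq_nontrivialParts_add_replicate Δ]
  simp

lemma sum_nontrivialParts_le (Δ : Nat.Partition m) : Δ.nontrivialParts.sum ≤ m := by
  have := sum_nontrivialParts_add_count_one Δ
  omega

lemma nontrivialParts_injective : Function.Injective (nontrivialParts (m := m)) := by
  intro Δ Λ h
  have hcount : Δ.parts.count 1 = Λ.parts.count 1 := by
    have := sum_nontrivialParts_add_count_one Δ
    have := sum_nontrivialParts_add_count_one Λ
    rw [h] at *
    omega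
  ext1
  rw [parts_eq_nontrivialParts_add_replicate Δ, parts_eq_nontrivialParts_add_replicate Λ, h,
    hcount]

lemma exists_nontrivialParts_eq {μ : Multiset ℕ} (hμ : ∀ j ∈ μ, 2 ≤ j) (hm : μ.sum ≤ m) :
    ∃ Λ : Nat.Partition m, Λ.nontrivialParts = μ := by
  refine ⟨⟨μ + Multiset.replicate (m - μ.sum) 1, ?_, ?_⟩, ?_⟩
  · intro j hj
    rcases Multiset.mem_add.mp hj with hj | hj
    · linarith [hμ j hj]
    · rw [Multiset.eq_of_mem_replicate hj]; norm_num
  · rw [Multiset.sum_add, Multiset.sum_replicate, smul_eq_mul, mul_one]; omega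
  · simp only [nontrivialParts, Multiset.filter_add, Multiset.filter_eq_self.mpr hμ]
    rw [Multiset.filter_two_le_replicate_one, add_zero]

end Nat.Partition

section extendPartition

variable {m n : ℕ}

lemma nontrivialParts_extendPartition (h : m ≤ n) (Δ : Nat.Partition m) :
    (extendPartition h Δ).nontrivialParts = Δ.nontrivialParts := by
  rw [Nat.Partition.nontrivialParts, extendPartition, Multiset.filter_add,
    Multiset.filter_two_le_replicate_one, add_zero]
  rfl

lemma count_extendPartition (h : m ≤ n) (Δ : Nat.Partition m) (j : ℕ) :
    (extendPartition h Δ).parts.count j = Δ.parts.count j + if j = 1 then n - m else 0 := by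
  simp [extendPartition, Multiset.count_replicate, eq_comm]

lemma extendPartition_self (Δ : Nat.Partition m) : extendPartition le_rfl Δ = Δ := by
  ext1
  simp [extendPartition]

end extendPartition

section aut

variable {m n : ℕ}

lemma aut_eq_prod_range (Δ : Nat.Partition m) {N : ℕ} (hN : m ≤ N) :
    aut Δ = ∏ j ∈ range (N + 1), (Δ.parts.count j).factorial * j ^ Δ.parts.count j := by
  refine prod_subset (range_subset_range.mpr (by omega)) fun j _ hj => ?_
  have hmj : m < j := by simpa using hj
  rw [Multiset.count_eq_zero.mpr fun hmem => by linarith [Nat.Partition.le_of_mem_parts hmem]]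
  simp

lemma aut_pos (Δ : Nat.Partition m) : 0 < aut Δ :=
  prod_pos fun j _ => Nat.mul_pos (Nat.factorial_pos _) <| by
    rcases Nat.eq_zero_or_pos (Δ.parts.count j) with h | h
    · simp [h]
    · exact Nat.pow_pos (Δ.parts_pos (Multiset.count_pos.mp h))

lemma aut_extendPartition_mul (h : m ≤ n) (Δ : Nat.Partition m) :
    aut (extendPartition h Δ) * (Δ.parts.count 1).factorial =
      aut Δ * (Δ.parts.count 1 + (n - m)).factorial := by
  have h1 : 1 ∈ range (n + 2) := by simp
  rw [aut_eq_prod_range _ (Nat.le_succ n), aut_eq_prod_range Δ (h.trans (Nat.le_succ n)),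
    ← mul_prod_erase _ _ h1, ← mul_prod_erase _ _ h1,
    prod_congr rfl fun j hj => by rw [count_extendPartition, if_neg (ne_of_mem_erase hj), add_zero],
    count_extendPartition, if_pos rfl]
  simp only [one_pow, mul_one]
  ring

lemma rho_eq_choose_smul (h : m ≤ n) (Δ : Nat.Partition m) :
    rho m n Δ = ((n - Δ.nontrivialParts.sum).choose (m - Δ.nontrivialParts.sum) : ℂ) •
      classSum n (extendPartition h Δ) := by
  have hc := Δ.sum_nontrivialParts_add_count_one
  have haut : (aut (extendPartition h Δ) : ℂ) * (Δ.parts.count 1).factorial =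
      aut Δ * (Δ.parts.count 1 + (n - m)).factorial := by
    exact_mod_cast aut_extendPartition_mul h Δ
  have hchoose : (n - Δ.nontrivialParts.sum).choose (m - Δ.nontrivialParts.sum) =
      (Δ.parts.count 1 + (n - m)).choose (Δ.parts.count 1) := by
    congr 1 <;> omega
  rw [rho, dif_pos h, hchoose, Nat.cast_add_choose]
  congr 1
  have hΔ : (aut Δ : ℂ) ≠ 0 := by exact_mod_cast (aut_pos Δ).ne'
  rw [div_eq_div_iff (mul_ne_zero hΔ (by exact_mod_cast (n - m).factorial_ne_zero))
    (by exact_mod_cast Nat.mul_ne_zero (Nat.factorial_ne_zero _) (Nat.factorial_ne_zero _))]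
  linear_combination ((n - m).factorial : ℂ) * haut

end aut

section classSum

variable {n : ℕ}

lemma classSum_coeff (Λ : Nat.Partition n) (τ : Perm (Fin n)) :
    (classSum n Λ).coeff τ = if τ.cycleType = Λ.nontrivialParts then 1 else 0 := by
  simp only [classSum, MonoidAlgebra.coeff_sum, MonoidAlgebra.coeff_single,
    Finsupp.coe_finsetSum, Finset.sum_apply, Finsupp.single_apply, sum_ite_eq', mem_filter,
    mem_univ, true_and, Nat.Partition.nontrivialParts]
  congr

lemma classLift_coeff_of_cycleType_eq {Λ : Nat.Partition n} {τ : Perm (Fin n)}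
    (hτ : τ.cycleType = Λ.nontrivialParts) (v : Nat.Partition n →₀ ℂ) :
    (classLift n v).coeff τ = v Λ := by
  rw [classLift, MonoidAlgebra.coeff_finsuppSum, Finsupp.sum_apply]
  simp_rw [MonoidAlgebra.coeff_smul_apply, classSum_coeff, hτ,
    Nat.Partition.nontrivialParts_injective.eq_iff, smul_eq_mul, mul_ite, mul_one, mul_zero]
  exact Finsupp.sum_ite_self_eq v Λ

lemma classLift_injective : Function.Injective (classLift n) := by
  intro v w h
  ext Λ
  obtain ⟨τ, hτ⟩ : ∃ τ : Perm (Fin n), τ.cycleType = Λ.nontrivialParts :=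
    (Perm.exists_with_cycleType_iff _).mpr
      ⟨by simpa using Λ.sum_nontrivialParts_le, fun _ => Λ.two_le_of_mem_nontrivialParts⟩
  rw [← classLift_coeff_of_cycleType_eq hτ, ← classLift_coeff_of_cycleType_eq hτ, h]

lemma rho_self (Λ : Nat.Partition n) : rho n n Λ = classSum n Λ := by
  rw [rho_eq_choose_smul le_rfl, Nat.choose_self, extendPartition_self, Nat.cast_one, one_smul]

lemma rhoLift_self (v : Nat.Partition n →₀ ℂ) : rhoLift n n v = classLift n v := by
  simp only [rhoLift, classLift, rho_self]

end classSum

section PartialPerm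

variable {α : Type*} [Fintype α] [DecidableEq α]

variable (α) in
def partialPerms (m : ℕ) (μ : Multiset ℕ) : Finset (Finset α × Perm α) :=
  {x | #x.1 = m ∧ x.2.support ⊆ x.1 ∧ x.2.cycleType = μ}

lemma mem_partialPerms {m : ℕ} {μ : Multiset ℕ} {x : Finset α × Perm α} :
    x ∈ partialPerms α m μ ↔ #x.1 = m ∧ x.2.support ⊆ x.1 ∧ x.2.cycleType = μ := by
  simp [partialPerms]

def partialPermMul (x y : Finset α × Perm α) : Finset α × Perm α := (x.1 ∪ y.1, x.2 * y.2)

variable (α) in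
def factorizations (m₁ m₂ : ℕ) (μ₁ μ₂ : Multiset ℕ) (x : Finset α × Perm α) :
    Finset ((Finset α × Perm α) × (Finset α × Perm α)) :=
  {q ∈ partialPerms α m₁ μ₁ ×ˢ partialPerms α m₂ μ₂ | partialPermMul q.1 q.2 = x}

lemma mem_factorizations {m₁ m₂ : ℕ} {μ₁ μ₂ : Multiset ℕ} {x : Finset α × Perm α}
    {q : (Finset α × Perm α) × (Finset α × Perm α)} :
    q ∈ factorizations α m₁ m₂ μ₁ μ₂ x ↔
      q.1 ∈ partialPerms α m₁ μ₁ ∧ q.2 ∈ partialPerms α m₂ μ₂ ∧ partialPermMul q.1 q.2 = x := by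
  simp [factorizations, and_assoc]

lemma card_filter_superset (T : Finset α) {k : ℕ} (hk : #T ≤ k) :
    #{S : Finset α | #S = k ∧ T ⊆ S} = (Fintype.card α - #T).choose (k - #T) := by
  rw [← card_compl, ← card_powersetCard]
  refine card_bij' (fun S _ => S \ T) (fun U _ => U ∪ T) (fun S hS => ?_) (fun U hU => ?_)
    (fun S hS => ?_) (fun U hU => ?_) <;>
    simp only [mem_filter, mem_univ, true_and, mem_powersetCard] at *
  · exact ⟨fun a ha => by simp [(mem_sdiff.mp ha).2], by rw [card_sdiff_of_subset hS.2, hS.1]⟩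
  · have hdisj : Disjoint U T := disjoint_left.mpr fun a ha => by simpa using hU.1 ha
    exact ⟨by rw [card_union_of_disjoint hdisj, hU.2]; omega, subset_union_right⟩
  · exact sdiff_union_of_subset hS.2
  · exact union_sdiff_cancel_right (disjoint_left.mpr fun a ha => by simpa using hU.1 ha)

lemma card_filter_partialPerms_snd_eq (m : ℕ) (μ : Multiset ℕ) (σ : Perm α) :
    #{x ∈ partialPerms α m μ | x.2 = σ} =
      if σ.cycleType = μ then #{S : Finset α | #S = m ∧ σ.support ⊆ S} else 0 := by
  split_ifs with hσ
  · refine card_bij' (fun x _ => x.1) (fun S _ => (S, σ)) ?_ ?_ ?_ ?_ <;>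
      aesop (add simp mem_partialPerms)
  · exact card_eq_zero.mpr <| filter_eq_empty_iff.mpr fun x hx hxσ =>
      hσ (hxσ ▸ (mem_partialPerms.mp hx).2.2)

lemma sum_partialPerms_single {m : ℕ} {μ : Multiset ℕ} (hμ : μ.sum ≤ m) :
    ∑ x ∈ partialPerms α m μ, MonoidAlgebra.single x.2 (1 : ℂ) =
      ((Fintype.card α - μ.sum).choose (m - μ.sum) : ℂ) •
        ∑ σ ∈ {σ : Perm α | σ.cycleType = μ}, MonoidAlgebra.single σ 1 := by
  rw [← sum_fiberwise' _ Prod.snd fun σ => MonoidAlgebra.single σ (1 : ℂ), smul_sum, sum_filter]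
  refine sum_congr rfl fun σ _ => ?_
  rw [sum_const, card_filter_partialPerms_snd_eq, ← Nat.cast_smul_eq_nsmul ℂ]
  split_ifs with hσ
  · rw [card_filter_superset _ (by rw [← Perm.sum_cycleType, hσ]; exact hμ),
      ← Perm.sum_cycleType, hσ]
  · simp

lemma sum_partialPerms_mul_sum_partialPerms (m₁ m₂ : ℕ) (μ₁ μ₂ : Multiset ℕ) :
    (∑ x ∈ partialPerms α m₁ μ₁, MonoidAlgebra.single x.2 (1 : ℂ)) *
        ∑ y ∈ partialPerms α m₂ μ₂, MonoidAlgebra.single y.2 1 =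
      ∑ z, #(factorizations α m₁ m₂ μ₁ μ₂ z) • MonoidAlgebra.single z.2 1 := by
  simp_rw [sum_mul_sum, MonoidAlgebra.single_mul_single, one_mul]
  rw [← sum_product']
  refine (sum_fiberwise' _ (fun q : (Finset α × Perm α) × (Finset α × Perm α) =>
    partialPermMul q.1 q.2) fun z => MonoidAlgebra.single z.2 (1 : ℂ)).symm.trans ?_
  simp only [sum_const, factorizations]

lemma support_subset_of_mem_factorizations {m₁ m₂ : ℕ} {μ₁ μ₂ : Multiset ℕ} {S : Finset α}
    {τ : Perm α} {q : (Finset α × Perm α) × (Finset α × Perm α)}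
    (hq : q ∈ factorizations α m₁ m₂ μ₁ μ₂ (S, τ)) :
    τ.support ⊆ S := by
  obtain ⟨hq₁, hq₂, hq⟩ := mem_factorizations.mp hq
  simp only [partialPermMul, Prod.mk.injEq] at hq
  rw [← hq.1, ← hq.2]
  exact (Perm.support_mul_le _ _).trans
    (union_subset_union (mem_partialPerms.mp hq₁).2.1 (mem_partialPerms.mp hq₂).2.1)

lemma card_mem_Icc_of_mem_factorizations {m₁ m₂ : ℕ} {μ₁ μ₂ : Multiset ℕ} {S : Finset α}
    {τ : Perm α} {q : (Finset α × Perm α) × (Finset α × Perm α)}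
    (hq : q ∈ factorizations α m₁ m₂ μ₁ μ₂ (S, τ)) :
    #S ∈ Icc (max m₁ m₂) (m₁ + m₂) := by
  obtain ⟨hq₁, hq₂, hq⟩ := mem_factorizations.mp hq
  have h₁ := (mem_partialPerms.mp hq₁).1
  have h₂ := (mem_partialPerms.mp hq₂).1
  simp only [partialPermMul, Prod.mk.injEq] at hq
  rw [← hq.1, mem_Icc]
  exact ⟨max_le (h₁ ▸ card_le_card subset_union_left) (h₂ ▸ card_le_card subset_union_right),
    h₁ ▸ h₂ ▸ card_union_le _ _⟩

end PartialPerm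

lemma rho_eq_sum_partialPerms {m : ℕ} (n : ℕ) (Δ : Nat.Partition m) :
    rho m n Δ = ∑ x ∈ partialPerms (Fin n) m Δ.nontrivialParts, MonoidAlgebra.single x.2 1 := by
  by_cases h : m ≤ n
  · rw [sum_partialPerms_single Δ.sum_nontrivialParts_le, Fintype.card_fin,
      rho_eq_choose_smul h, classSum, ← Nat.Partition.nontrivialParts,
      nontrivialParts_extendPartition]
  · rw [rho, dif_neg h, eq_comm]
    refine sum_eq_zero fun x hx => absurd (card_le_univ x.1) ?_
    rw [(mem_partialPerms.mp hx).1, Fintype.card_fin]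
    omega

lemma Equiv.Perm.extendDomain_eq_ofSubtype {α β : Type*} {p : β → Prop} [DecidablePred p]
    (e : Perm α) (f : α ≃ Subtype p) : e.extendDomain f = ofSubtype (f.permCongr e) := rfl

section Transport

variable {α β : Type*} {S : Finset β}

lemma map_univ_asEmbedding [Fintype α] (f : α ≃ S) : univ.map f.asEmbedding = S := by
  ext b
  simp only [mem_map, mem_univ, true_and, asEmbedding_apply]
  exact ⟨by rintro ⟨a, rfl⟩; exact (f a).2, fun hb => ⟨f.symm ⟨b, hb⟩, by simp⟩⟩

variable [DecidableEq β]

lemma exists_extendDomain_eq_of_support_subset [Fintype β] (f : α ≃ S) {ρ : Perm β}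
    (h : ρ.support ⊆ S) :
    ∃ σ : Perm α, σ.extendDomain f = ρ := by
  obtain ⟨ρ', rfl⟩ := (Perm.mem_range_ofSubtype_iff (p := (· ∈ S))).mpr (by exact_mod_cast h)
  exact ⟨f.symm.permCongr ρ', by
    rw [Perm.extendDomain_eq_ofSubtype, ← permCongr_symm, apply_symm_apply]⟩

lemma exists_equiv_extendDomain_eq [Fintype α] [DecidableEq α] [Fintype β] {τ₀ : Perm α}
    {τ : Perm β} (hS : #S = Fintype.card α) (hτ : τ.support ⊆ S)
    (hct : τ₀.cycleType = τ.cycleType) :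
    ∃ f : α ≃ S, τ₀.extendDomain f = τ := by
  obtain ⟨τ', rfl⟩ := (Perm.mem_range_ofSubtype_iff (p := (· ∈ S))).mpr (by exact_mod_cast hτ)
  let f₀ : α ≃ S := Fintype.equivOfCardEq (by simp [hS])
  have hconj : IsConj (f₀.permCongr τ₀) τ' := by
    rw [Perm.isConj_iff_cycleType_eq, ← Perm.cycleType_ofSubtype (g := τ'), ← hct,
      ← Perm.cycleType_ofSubtype, ← Perm.extendDomain_eq_ofSubtype, Perm.cycleType_extendDomain]
  obtain ⟨g, hg⟩ := isConj_iff.mp hconj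
  refine ⟨f₀.trans g, ?_⟩
  have htrans : (f₀.trans g).permCongr τ₀ = g.permCongr (f₀.permCongr τ₀) := by
    ext; simp [permCongr_apply]
  rw [Perm.extendDomain_eq_ofSubtype, htrans, permCongr_eq_mul, hg]

def liftPartialPerm (f : α ≃ S) (x : Finset α × Perm α) : Finset β × Perm β :=
  (x.1.map f.asEmbedding, x.2.extendDomain f)

lemma liftPartialPerm_injective (f : α ≃ S) : Function.Injective (liftPartialPerm f) := by
  rintro ⟨A, σ⟩ ⟨B, ρ⟩ h
  simp only [liftPartialPerm, Prod.mk.injEq, map_inj] at h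
  exact Prod.ext h.1 (Perm.extendDomainHom_injective f h.2)

lemma liftPartialPerm_partialPermMul [DecidableEq α] (f : α ≃ S) (x y : Finset α × Perm α) :
    liftPartialPerm f (partialPermMul x y) =
      partialPermMul (liftPartialPerm f x) (liftPartialPerm f y) := by
  simp [liftPartialPerm, partialPermMul, map_union, Perm.extendDomain_mul]

lemma liftPartialPerm_mem_partialPerms_iff [Fintype α] [DecidableEq α] [Fintype β] (f : α ≃ S)
    {m : ℕ} {μ : Multiset ℕ} {x : Finset α × Perm α} :
    liftPartialPerm f x ∈ partialPerms β m μ ↔ x ∈ partialPerms α m μ := by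
  simp [liftPartialPerm, mem_partialPerms]

lemma exists_liftPartialPerm_eq [Fintype α] [Fintype β] (f : α ≃ S) {x : Finset β × Perm β}
    (hx : x.2.support ⊆ x.1) (hS : x.1 ⊆ S) : ∃ y, liftPartialPerm f y = x := by
  obtain ⟨A, -, hA⟩ := subset_map_iff.mp ((map_univ_asEmbedding f).symm ▸ hS)
  obtain ⟨σ, hσ⟩ := exists_extendDomain_eq_of_support_subset f (hx.trans hS)
  exact ⟨(A, σ), Prod.ext hA.symm hσ⟩

lemma card_factorizations_liftPartialPerm [Fintype α] [DecidableEq α] [Fintype β] (f : α ≃ S)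
    (m₁ m₂ : ℕ) (μ₁ μ₂ : Multiset ℕ) (x : Finset α × Perm α) :
    #(factorizations β m₁ m₂ μ₁ μ₂ (liftPartialPerm f x)) =
      #(factorizations α m₁ m₂ μ₁ μ₂ x) := by
  have hmem : ∀ q, (liftPartialPerm f q.1, liftPartialPerm f q.2) ∈
        factorizations β m₁ m₂ μ₁ μ₂ (liftPartialPerm f x) ↔
      q ∈ factorizations α m₁ m₂ μ₁ μ₂ x := by
    intro q
    simp only [mem_factorizations, liftPartialPerm_mem_partialPerms_iff,
      ← liftPartialPerm_partialPermMul, (liftPartialPerm_injective f).eq_iff]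
  refine (card_bij (fun q _ => (liftPartialPerm f q.1, liftPartialPerm f q.2))
    (fun q hq => (hmem q).mpr hq) (fun q _ q' _ h => ?_) (fun q hq => ?_)).symm
  · simp only [Prod.mk.injEq, (liftPartialPerm_injective f).eq_iff] at h
    exact Prod.ext h.1 h.2
  · obtain ⟨hq₁, hq₂, hmul⟩ := mem_factorizations.mp hq
    have hS : q.1.1 ∪ q.2.1 ⊆ S := by
      rw [show q.1.1 ∪ q.2.1 = x.1.map f.asEmbedding from congrArg Prod.fst hmul]
      exact (map_subset_map.mpr (subset_univ x.1)).trans (map_univ_asEmbedding f).le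
    obtain ⟨y₁, hy₁⟩ := exists_liftPartialPerm_eq f (mem_partialPerms.mp hq₁).2.1
      (subset_union_left.trans hS)
    obtain ⟨y₂, hy₂⟩ := exists_liftPartialPerm_eq f (mem_partialPerms.mp hq₂).2.1
      (subset_union_right.trans hS)
    exact ⟨(y₁, y₂), (hmem _).mp (by rwa [hy₁, hy₂]), by rw [hy₁, hy₂]⟩

end Transport

section stable

variable (m₁ m₂ : ℕ) (μ₁ μ₂ : Multiset ℕ)

-- Independent of the representative `h.choose`, by `card_factorizations_eq_stableCoeff`.
noncomputable def stableCoeff (k : ℕ) (μ : Multiset ℕ) : ℕ :=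
  if h : ∃ τ : Perm (Fin k), τ.cycleType = μ then
    #(factorizations (Fin k) m₁ m₂ μ₁ μ₂ (univ, h.choose))
  else 0

lemma card_factorizations_eq_stableCoeff {α : Type*} [Fintype α] [DecidableEq α]
    {S : Finset α} {τ : Perm α} (hτ : τ.support ⊆ S) :
    #(factorizations α m₁ m₂ μ₁ μ₂ (S, τ)) = stableCoeff m₁ m₂ μ₁ μ₂ #S τ.cycleType := by
  have hex : ∃ τ₀ : Perm (Fin #S), τ₀.cycleType = τ.cycleType :=
    (Perm.exists_with_cycleType_iff _).mpr ⟨by simpa [Perm.sum_cycleType] using card_le_card hτ,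
      fun _ => Perm.two_le_of_mem_cycleType⟩
  obtain ⟨f, hf⟩ := exists_equiv_extendDomain_eq (by simp) hτ hex.choose_spec
  have hlift : (S, τ) = liftPartialPerm f (univ, hex.choose) := by
    rw [liftPartialPerm, map_univ_asEmbedding, hf]
  rw [stableCoeff, dif_pos hex, hlift, card_factorizations_liftPartialPerm]

lemma stableCoeff_eq_zero {k : ℕ} (hk : k ∉ Icc (max m₁ m₂) (m₁ + m₂)) (μ : Multiset ℕ) :
    stableCoeff m₁ m₂ μ₁ μ₂ k μ = 0 := by
  rw [stableCoeff]
  split_ifs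
  · refine card_eq_zero.mpr <| eq_empty_iff_forall_notMem.mpr fun q hq => hk ?_
    simpa using card_mem_Icc_of_mem_factorizations hq
  · rfl

noncomputable def stableBracket (k : ℕ) : Nat.Partition k →₀ ℂ :=
  Finsupp.equivFunOnFinite.symm fun Λ => stableCoeff m₁ m₂ μ₁ μ₂ k Λ.nontrivialParts

lemma stableBracket_eq_zero {k : ℕ} (hk : k ∉ Icc (max m₁ m₂) (m₁ + m₂)) :
    stableBracket m₁ m₂ μ₁ μ₂ k = 0 := by
  ext Λ
  simp [stableBracket, stableCoeff_eq_zero m₁ m₂ μ₁ μ₂ hk]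

lemma rhoLift_stableBracket (k n : ℕ) :
    rhoLift k n (stableBracket m₁ m₂ μ₁ μ₂ k) =
      ∑ x ∈ {x : Finset (Fin n) × Perm (Fin n) | #x.1 = k ∧ x.2.support ⊆ x.1},
        (stableCoeff m₁ m₂ μ₁ μ₂ k x.2.cycleType : ℂ) • MonoidAlgebra.single x.2 1 := by
  have hdisj : ((univ : Finset (Nat.Partition k)) : Set (Nat.Partition k)).PairwiseDisjoint
      fun Λ => partialPerms (Fin n) k Λ.nontrivialParts := by
    intro Λ _ Λ' _ hne
    refine disjoint_left.mpr fun x hx hx' => hne (Nat.Partition.nontrivialParts_injective ?_)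
    rw [← (mem_partialPerms.mp hx).2.2, (mem_partialPerms.mp hx').2.2]
  have hunion : univ.biUnion (fun Λ : Nat.Partition k => partialPerms (Fin n) k Λ.nontrivialParts) =
      ({x | #x.1 = k ∧ x.2.support ⊆ x.1} : Finset (Finset (Fin n) × Perm (Fin n))) := by
    ext x
    simp only [mem_biUnion, mem_univ, true_and, mem_partialPerms, mem_filter]
    refine ⟨fun ⟨Λ, h⟩ => ⟨h.1, h.2.1⟩, fun ⟨hk, hsupp⟩ => ?_⟩
    obtain ⟨Λ, hΛ⟩ := Nat.Partition.exists_nontrivialParts_eq (m := k)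
      (fun _ => Perm.two_le_of_mem_cycleType)
      (by simpa [Perm.sum_cycleType, ← hk] using card_le_card hsupp)
    exact ⟨Λ, hk, hsupp, hΛ.symm⟩
  rw [← hunion, sum_biUnion hdisj, rhoLift,
    Finsupp.sum_fintype _ (fun Λ c => c • rho k n Λ) fun _ => zero_smul _ _]
  refine sum_congr rfl fun Λ _ => ?_
  rw [rho_eq_sum_partialPerms, smul_sum]
  refine sum_congr rfl fun x hx => ?_
  rw [(mem_partialPerms.mp hx).2.2]
  rfl

end stable

lemma rho_mul_rho_eq_sum_rhoLift {m₁ m₂ : ℕ} (Δ₁ : Nat.Partition m₁) (Δ₂ : Nat.Partition m₂)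
    (n : ℕ) :
    rho m₁ n Δ₁ * rho m₂ n Δ₂ = ∑ k ∈ range (n + 1),
      rhoLift k n (stableBracket m₁ m₂ Δ₁.nontrivialParts Δ₂.nontrivialParts k) := by
  have hterm : ∀ z : Finset (Fin n) × Perm (Fin n),
      #(factorizations (Fin n) m₁ m₂ Δ₁.nontrivialParts Δ₂.nontrivialParts z) •
          MonoidAlgebra.single z.2 (1 : ℂ) =
        if z.2.support ⊆ z.1 then
          (stableCoeff m₁ m₂ Δ₁.nontrivialParts Δ₂.nontrivialParts #z.1 z.2.cycleType : ℂ) •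
            MonoidAlgebra.single z.2 1
        else 0 := by
    rintro ⟨S, τ⟩
    split_ifs with hτ
    · rw [card_factorizations_eq_stableCoeff _ _ _ _ hτ, Nat.cast_smul_eq_nsmul]
    · rw [card_eq_zero.mpr (eq_empty_iff_forall_notMem.mpr fun q hq =>
        hτ (support_subset_of_mem_factorizations hq)), zero_smul]
  rw [rho_eq_sum_partialPerms, rho_eq_sum_partialPerms, sum_partialPerms_mul_sum_partialPerms,
    sum_congr rfl fun z _ => hterm z, ← sum_filter,
    ← sum_fiberwise_of_maps_to (g := fun z => #z.1) (t := range (n + 1))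
      fun z _ => mem_range_succ_iff.mpr ((card_le_univ z.1).trans_eq (Fintype.card_fin n))]
  refine sum_congr rfl fun k _ => ?_
  rw [rhoLift_stableBracket, filter_filter]
  refine sum_congr (by simp [and_comm]) fun z hz => ?_
  rw [(mem_filter.mp hz).2.1]

lemma eq_stableBracket_of_recursion {m₁ m₂ : ℕ} {Δ₁ : Nat.Partition m₁}
    {Δ₂ : Nat.Partition m₂} {br : (k : ℕ) → (Nat.Partition k →₀ ℂ)}
    (hbr : ∀ n, max m₁ m₂ ≤ n →
      classLift n (br n) =
        rho m₁ n Δ₁ * rho m₂ n Δ₂ - ∑ k ∈ Ico (max m₁ m₂) n, rhoLift k n (br k))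
    {n : ℕ} (hn : max m₁ m₂ ≤ n) :
    br n = stableBracket m₁ m₂ Δ₁.nontrivialParts Δ₂.nontrivialParts n := by
  induction n using Nat.strong_induction_on with
  | _ n ih =>
    have hprev : ∑ k ∈ Ico (max m₁ m₂) n, rhoLift k n (br k) =
        ∑ k ∈ Ico (max m₁ m₂) n,
          rhoLift k n (stableBracket m₁ m₂ Δ₁.nontrivialParts Δ₂.nontrivialParts k) :=
      sum_congr rfl fun k hk => by rw [ih k (mem_Ico.mp hk).2 (mem_Ico.mp hk).1]
    have hsmall : ∑ k ∈ range (max m₁ m₂),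
        rhoLift k n (stableBracket m₁ m₂ Δ₁.nontrivialParts Δ₂.nontrivialParts k) = 0 :=
      sum_eq_zero fun k hk => by
        rw [stableBracket_eq_zero _ _ _ _ (by simp at hk ⊢; omega), rhoLift,
          Finsupp.sum_zero_index]
    apply classLift_injective
    rw [hbr n hn, hprev, rho_mul_rho_eq_sum_rhoLift, sum_range_succ,
      ← sum_range_add_sum_Ico _ hn, hsmall, zero_add, add_sub_cancel_left, rhoLift_self]

/-- For partitions `Δ₁`, `Δ₂`, the stabilized products `ρ_n(Δ₁)·ρ_n(Δ₂)` in `Z(ℂ[S_n])`,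
expanded in the stabilized basis via the recursion
`{Δ₁Δ₂}_n = ρ_n(Δ₁)·ρ_n(Δ₂) − ∑_{k=max}^{n−1} ρ_n({Δ₁Δ₂}_k)`,
have coefficients `{Δ₁Δ₂}_k` vanishing for all `k > |Δ₁| + |Δ₂|`. -/
theorem bracket_vanishes_above_sum_of_degrees
    (m₁ m₂ : ℕ) (Δ₁ : Nat.Partition m₁) (Δ₂ : Nat.Partition m₂)
    (br : (k : ℕ) → (Nat.Partition k →₀ ℂ))
    (hbr : ∀ n, max m₁ m₂ ≤ n →
      classLift n (br n) =
        rho m₁ n Δ₁ * rho m₂ n Δ₂ -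
          ∑ k ∈ Finset.Ico (max m₁ m₂) n, rhoLift k n (br k)) :
    ∀ k, m₁ + m₂ < k → br k = 0 := by
  intro k hk
  rw [eq_stableBracket_of_recursion hbr (by omega),
    stableBracket_eq_zero _ _ _ _ (by simp; omega)]
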